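/- Let d ≥ 2, let g ∈ L²(ℝ), let Δ ⊂ ℝ × ℝ be an arbitrary countable set, let Q ⊂ S^{d−1} be a finite set, and let ε > 0. Then there exists a Schwartz function f on ℝ^d with support contained in B_ε(0) and ‖f‖₂ = 1 such that ⟨f, g_{m,n,u}⟩ = 0 for all (m,n) ∈ Δ and u ∈ Q. Consequently, the system {g_{m,n,u}}_{(m,n,u)∈Δ×Q} is not a frame — indeed not even a Bessel system — for any subspace of L²(ℝ^d) containing all Schwartz functions supported in B_ε(0). -/

import Mathlib

/-!
Coefficients in a direction `u` see `f` only through `x ↦ ⟪u, x⟫`: translating `f` by `w`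
multiplies the coefficient at `(m, n)` by a phase and moves it to `(m, n - ⟪u, w⟫)`, so a
translation orthogonal to `u` changes nothing. Starting from a bump function, replace `h` by
`h - h (· - w)` with `w ⊥ u` (possible as `d ≥ 2`) for each `u ∈ Q` in turn, shrinking the radius
so that the support stays in `B_ε(0)` and `h 0 ≠ 0`. The result has vanishing coefficients in all
directions of `Q` at every `(m, n) ∈ ℝ²`; normalised, it violates every lower frame bound.

Linearity of the coefficients needs the integrals to converge (otherwise they are junk zeros):
`g ∈ L²` is locally integrable, and so is `x ↦ g ⟪u, x⟫`, a function of the first coordinate in an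
orthonormal basis starting with `u`.
-/

open MeasureTheory Real Complex

noncomputable section

/-- The directional Gabor coefficient `⟨f, g_{m,n,u}⟩`. -/
def gaborCoef {d : ℕ} (f : EuclideanSpace ℝ (Fin d) → ℂ) (g : ℝ → ℂ)
    (m n : ℝ) (u : EuclideanSpace ℝ (Fin d)) : ℂ :=
  ∫ x : EuclideanSpace ℝ (Fin d),
    f x * Complex.exp ((-(2 * Real.pi * m * (inner ℝ u x : ℝ)) : ℝ) * Complex.I) *
      (starRingEnd ℂ) (g ((inner ℝ u x : ℝ) - n))

open Set Metric Function

namespace MeasureTheory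

variable {X Y F : Type*} [TopologicalSpace X] [TopologicalSpace Y] [MeasurableSpace X]
  [MeasurableSpace Y] [NormedAddCommGroup F] {μ : Measure X} {ν : Measure Y}

theorem LocallyIntegrable.comp_measurePreserving {G : Y → F} (hG : LocallyIntegrable G ν)
    {e : X → Y} (he : MeasurePreserving e μ ν) (he' : MeasurableEmbedding e)
    (hc : Continuous e) : LocallyIntegrable (G ∘ e) μ := fun x ↦ by
  obtain ⟨U, hU, hGU⟩ := hG (e x)
  exact ⟨e ⁻¹' U, hc.continuousAt hU, (he.integrableOn_comp_preimage he').2 hGU⟩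

theorem LocallyIntegrable.comp_fst [SFinite μ] [SFinite ν] [IsLocallyFiniteMeasure ν] {G : X → F}
    (hG : LocallyIntegrable G μ) : LocallyIntegrable (fun p : X × Y ↦ G p.1) (μ.prod ν) := by
  rintro ⟨x, y⟩
  obtain ⟨U, hU, hGU⟩ := hG x
  obtain ⟨V, hV, hνV⟩ := ν.finiteAt_nhds y
  refine ⟨U ×ˢ V, prod_mem_nhds hU hV, ?_⟩
  have : IsFiniteMeasure (ν.restrict V) := ⟨by simpa using hνV⟩
  rw [IntegrableOn, ← Measure.prod_restrict]
  by_cases hV0 : ν.restrict V = 0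
  · simp [hV0]
  · exact (Integrable.comp_fst_iff hV0).2 hGU

end MeasureTheory

theorem exists_orthonormalBasis_apply_eq {𝕜 E ι : Type*} [RCLike 𝕜] [NormedAddCommGroup E]
    [InnerProductSpace 𝕜 E] [Fintype ι] (hcard : Module.finrank 𝕜 E = Fintype.card ι) (i : ι)
    {u : E} (hu : ‖u‖ = 1) : ∃ b : OrthonormalBasis ι 𝕜 E, b i = u := by
  have : Module.Finite 𝕜 E := Module.finite_of_finrank_pos (hcard ▸ Fintype.card_pos_iff.2 ⟨i⟩)
  have : Orthonormal 𝕜 (({i} : Set ι).domRestrict fun _ ↦ u) :=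
    ⟨fun _ ↦ hu, fun j j' hjj' ↦ absurd (Subtype.ext (j.2.trans j'.2.symm)) hjj'⟩
  obtain ⟨b, hb⟩ := this.exists_orthonormalBasis_extension_of_card_eq hcard
  exact ⟨b, hb i rfl⟩

theorem locallyIntegrable_comp_inner {F : Type*} [NormedAddCommGroup F] {k : ℕ}
    {u : EuclideanSpace ℝ (Fin (k + 1))} (hu : ‖u‖ = 1) {G : ℝ → F} (hG : LocallyIntegrable G) :
    LocallyIntegrable (fun x : EuclideanSpace ℝ (Fin (k + 1)) ↦ G (inner ℝ u x)) := by
  obtain ⟨b, rfl⟩ := exists_orthonormalBasis_apply_eq (𝕜 := ℝ) (ι := Fin (k + 1)) (by simp) 0 hu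
  have hsplit := ((hG.comp_fst (ν := (volume : Measure (Fin k → ℝ)))).comp_measurePreserving
    (volume_preserving_piFinSuccAbove (fun _ ↦ ℝ) 0) (MeasurableEquiv.measurableEmbedding _)
    ((continuous_apply 0).prodMk (continuous_pi fun _ ↦ continuous_apply _)))
  have := (hsplit.comp_measurePreserving
    (EuclideanSpace.volume_preserving_symm_measurableEquiv_toLp _)
    (MeasurableEquiv.measurableEmbedding _) (PiLp.continuous_ofLp _ _)).comp_measurePreserving
    b.measurePreserving_repr b.repr.toHomeomorph.measurableEmbedding b.repr.continuous
  simpa [Function.comp_def, b.repr_apply_apply] using this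

theorem exists_norm_eq_inner_eq_zero {E : Type*} [NormedAddCommGroup E] [InnerProductSpace ℝ E]
    [FiniteDimensional ℝ E] (hE : 2 ≤ Module.finrank ℝ E) (u : E) {r : ℝ} (hr : 0 ≤ r) :
    ∃ w : E, ‖w‖ = r ∧ inner ℝ u w = 0 := by
  have hpos : 0 < Module.finrank ℝ (ℝ ∙ u)ᗮ := by
    have := (ℝ ∙ u).finrank_add_finrank_orthogonal
    have := finrank_span_le_card (R := ℝ) ({u} : Set E)
    simp only [Set.toFinset_singleton, Finset.card_singleton] at this
    omega
  obtain ⟨v, hv, hv0⟩ :=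
    Submodule.exists_mem_ne_zero_of_ne_bot (Submodule.one_le_finrank_iff.mp hpos)
  refine ⟨(r / ‖v‖) • v, ?_, ?_⟩
  · rw [norm_smul, Real.norm_eq_abs, abs_div, abs_of_nonneg hr, abs_norm,
      div_mul_cancel₀ _ (norm_ne_zero_iff.2 hv0)]
  · rw [inner_smul_right, Submodule.mem_orthogonal_singleton_iff_inner_right.1 hv, mul_zero]

theorem support_sub_comp_sub_subset_ball {E M : Type*} [SeminormedAddCommGroup E] [AddGroup M]
    {h : E → M} {ρ : ℝ} (hh : support h ⊆ ball 0 ρ) (w : E) :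
    support (fun x ↦ h x - h (x - w)) ⊆ ball 0 (ρ + ‖w‖) := by
  intro x hx
  rcases support_sub _ _ hx with hx | hx
  · exact ball_subset_ball (le_add_of_nonneg_right (norm_nonneg w)) (hh hx)
  · rw [mem_ball_zero_iff]
    have := mem_ball_zero_iff.1 (hh (show x - w ∈ support h from hx))
    linarith [norm_le_norm_sub_add x w]

theorem exists_integral_norm_sq_smul_eq_one {X F : Type*} [TopologicalSpace X] [MeasurableSpace X]
    {μ : Measure X} [μ.IsOpenPosMeasure] [NormedAddCommGroup F] [NormedSpace ℝ F] {φ : X → F}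
    (hφ : Continuous φ) (hint : Integrable (fun x ↦ ‖φ x‖ ^ 2) μ) {x₀ : X} (hx₀ : φ x₀ ≠ 0) :
    ∃ c : ℝ, ∫ x, ‖c • φ x‖ ^ 2 ∂μ = 1 := by
  have hpos : 0 < ∫ x, ‖φ x‖ ^ 2 ∂μ :=
    integral_pos_of_integrable_nonneg_nonzero (by fun_prop) hint (fun _ ↦ by positivity)
      (by simpa using hx₀)
  refine ⟨(√(∫ x, ‖φ x‖ ^ 2 ∂μ))⁻¹, ?_⟩
  simp_rw [norm_smul, mul_pow, integral_const_mul, Real.norm_eq_abs, sq_abs, inv_pow,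
    Real.sq_sqrt hpos.le]
  exact inv_mul_cancel₀ hpos.ne'

open scoped ContDiff

def gaborIntegrand {d : ℕ} (f : EuclideanSpace ℝ (Fin d) → ℂ) (g : ℝ → ℂ) (m n : ℝ)
    (u x : EuclideanSpace ℝ (Fin d)) : ℂ :=
  f x * Complex.exp ((-(2 * Real.pi * m * (inner ℝ u x : ℝ)) : ℝ) * Complex.I) *
    (starRingEnd ℂ) (g ((inner ℝ u x : ℝ) - n))

section Gabor

variable {d : ℕ} {g : ℝ → ℂ} {m n : ℝ} {u : EuclideanSpace ℝ (Fin d)}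

theorem gaborCoef_eq_integral (f : EuclideanSpace ℝ (Fin d) → ℂ) :
    gaborCoef f g m n u = ∫ x, gaborIntegrand f g m n u x :=
  rfl

theorem integrable_gaborIntegrand (hu : ‖u‖ = 1) (hg : LocallyIntegrable g)
    {h : EuclideanSpace ℝ (Fin d) → ℂ} (hh : Continuous h) (hhc : HasCompactSupport h) :
    Integrable (gaborIntegrand h g m n u) := by
  obtain ⟨k, rfl⟩ : ∃ k, d = k + 1 :=
    Nat.exists_eq_succ_of_ne_zero (by rintro rfl; simp [Subsingleton.elim u 0] at hu)
  have hconj : LocallyIntegrable fun t ↦ starRingEnd ℂ (g (t - n)) :=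
    locallyIntegrableOn_univ.1 <| conjCLE.toContinuousLinearMap.locallyIntegrableOn_comp <|
      locallyIntegrableOn_univ.2 <| hg.comp_measurePreserving (measurePreserving_sub_right _ n)
        (measurableEmbedding_subRight n) (continuous_sub_right n)
  exact (locallyIntegrable_comp_inner hu hconj).integrable_smul_left_of_hasCompactSupport
    (by fun_prop) hhc.mul_right

theorem gaborCoef_sub {h₁ h₂ : EuclideanSpace ℝ (Fin d) → ℂ}
    (hi₁ : Integrable (gaborIntegrand h₁ g m n u)) (hi₂ : Integrable (gaborIntegrand h₂ g m n u)) :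
    gaborCoef (fun x ↦ h₁ x - h₂ x) g m n u = gaborCoef h₁ g m n u - gaborCoef h₂ g m n u := by
  rw [gaborCoef_eq_integral, gaborCoef_eq_integral, gaborCoef_eq_integral, ← integral_sub hi₁ hi₂]
  simp only [gaborIntegrand, sub_mul]

theorem gaborCoef_smul (c : ℝ) (f : EuclideanSpace ℝ (Fin d) → ℂ) :
    gaborCoef (c • f) g m n u = c • gaborCoef f g m n u := by
  simp only [gaborCoef, ← integral_smul, Pi.smul_apply, smul_mul_assoc]

theorem gaborCoef_comp_sub_right (h : EuclideanSpace ℝ (Fin d) → ℂ) (w : EuclideanSpace ℝ (Fin d)) :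
    gaborCoef (fun x ↦ h (x - w)) g m n u =
      Complex.exp ((-(2 * Real.pi * m * (inner ℝ u w : ℝ)) : ℝ) * Complex.I) *
        gaborCoef h g m (n - inner ℝ u w) u := by
  have hphase : ∀ t : ℝ, Complex.exp ((-(2 * Real.pi * m * t) : ℝ) * Complex.I) =
      Complex.exp ((-(2 * Real.pi * m * inner ℝ u w) : ℝ) * Complex.I) *
        Complex.exp ((-(2 * Real.pi * m * (t - inner ℝ u w)) : ℝ) * Complex.I) := fun t ↦ by
    rw [← Complex.exp_add]; push_cast; ring_nf
  rw [gaborCoef, gaborCoef, ← integral_const_mul]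
  conv_rhs => rw [← integral_sub_right_eq_self _ w]
  congr 1 with x
  simp only [inner_sub_right, sub_sub_sub_cancel_right, hphase (inner ℝ u x)]
  ring

theorem gaborCoef_sub_comp_sub_right (hu : ‖u‖ = 1) (hg : LocallyIntegrable g)
    {h : EuclideanSpace ℝ (Fin d) → ℂ} (hh : Continuous h) (hhc : HasCompactSupport h)
    (w : EuclideanSpace ℝ (Fin d)) :
    gaborCoef (fun x ↦ h x - h (x - w)) g m n u = gaborCoef h g m n u -
      Complex.exp ((-(2 * Real.pi * m * (inner ℝ u w : ℝ)) : ℝ) * Complex.I) *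
        gaborCoef h g m (n - inner ℝ u w) u := by
  rw [gaborCoef_sub (integrable_gaborIntegrand hu hg hh hhc)
    (integrable_gaborIntegrand (h := fun x ↦ h (x - w)) hu hg (hh.comp (continuous_sub_right w))
      (hhc.comp_homeomorph (Homeomorph.subRight w))), gaborCoef_comp_sub_right]

end Gabor

theorem exists_contDiff_support_subset_ball_gaborCoef_eq_zero {d : ℕ} (hd : 2 ≤ d) {g : ℝ → ℂ}
    (hg : LocallyIntegrable g) (s : Finset (EuclideanSpace ℝ (Fin d))) (hs : ∀ u ∈ s, ‖u‖ = 1)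
    {r : ℝ} (hr : 0 < r) :
    ∃ h : EuclideanSpace ℝ (Fin d) → ℂ, ContDiff ℝ ∞ h ∧ support h ⊆ ball 0 r ∧ h 0 ≠ 0 ∧
      ∀ u ∈ s, ∀ m n : ℝ, gaborCoef h g m n u = 0 := by
  classical
  induction s using Finset.induction_on generalizing r with
  | empty =>
    let φ : ContDiffBump (0 : EuclideanSpace ℝ (Fin d)) := ⟨r / 2, r, by positivity, by linarith⟩
    refine ⟨fun x ↦ (φ x : ℂ), ofRealCLM.contDiff.comp φ.contDiff, ?_, ?_, by simp⟩
    · simpa [φ.support_eq] using (support_comp_subset ofReal_zero φ).trans φ.support_eq.le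
    · exact ofReal_ne_zero.2 (φ.pos_of_mem_ball (mem_ball_self hr)).ne'
  | insert u s _ ih =>
    obtain ⟨h, hsmooth, hsupp, h0, hcoef⟩ :=
      ih (fun v hv ↦ hs v (Finset.mem_insert_of_mem hv)) (by positivity : 0 < r / 4)
    obtain ⟨w, hw, huw⟩ :=
      exists_norm_eq_inner_eq_zero (by simpa using hd) u (by positivity : 0 ≤ r / 2)
    have hhc : HasCompactSupport h := HasCompactSupport.of_support_subset_isCompact
      (isCompact_closedBall 0 (r / 4)) (hsupp.trans ball_subset_closedBall)
    refine ⟨fun x ↦ h x - h (x - w), hsmooth.sub (hsmooth.comp (contDiff_id.sub contDiff_const)),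
      (support_sub_comp_sub_subset_ball hsupp w).trans (ball_subset_ball (by linarith)), ?_, ?_⟩
    · have : h (-w) = 0 := notMem_support.1 fun hmem ↦ by
        have := mem_ball_zero_iff.1 (hsupp hmem)
        rw [norm_neg] at this
        linarith
      simpa [this] using h0
    · intro v hv m n
      rw [gaborCoef_sub_comp_sub_right (hs v hv) hg hsmooth.continuous hhc]
      rcases Finset.mem_insert.1 hv with rfl | hv
      · simp [huw]
      · simp [hcoef v hv]

theorem finitely_many_directions_not_frame_general {d : ℕ} (hd : 2 ≤ d)
    (g : ℝ → ℂ) (hg : MemLp g 2 volume)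
    (Δ : Set (ℝ × ℝ))
    (Q : Set (EuclideanSpace ℝ (Fin d))) (hQfin : Q.Finite)
    (hQsphere : ∀ u ∈ Q, ‖u‖ = 1) (ε : ℝ) (hε : 0 < ε) :
    (∃ f : SchwartzMap (EuclideanSpace ℝ (Fin d)) ℂ,
      Function.support ⇑f ⊆ Metric.ball (0 : EuclideanSpace ℝ (Fin d)) ε ∧
      (∫ x : EuclideanSpace ℝ (Fin d), ‖f x‖ ^ 2) = 1 ∧
      ∀ p ∈ Δ, ∀ u ∈ Q, gaborCoef (⇑f) g p.1 p.2 u = 0) ∧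
    ¬ ∃ A B : ℝ, 0 < A ∧ A ≤ B ∧
      ∀ f : SchwartzMap (EuclideanSpace ℝ (Fin d)) ℂ,
        Function.support ⇑f ⊆ Metric.ball (0 : EuclideanSpace ℝ (Fin d)) ε →
        A * ∫ x : EuclideanSpace ℝ (Fin d), ‖f x‖ ^ 2 ≤
            (∑' p : Δ, ∑' u : Q, ‖gaborCoef (⇑f) g (p : ℝ × ℝ).1 (p : ℝ × ℝ).2
              (u : EuclideanSpace ℝ (Fin d))‖ ^ 2) ∧
          (∑' p : Δ, ∑' u : Q, ‖gaborCoef (⇑f) g (p : ℝ × ℝ).1 (p : ℝ × ℝ).2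
              (u : EuclideanSpace ℝ (Fin d))‖ ^ 2) ≤
            B * ∫ x : EuclideanSpace ℝ (Fin d), ‖f x‖ ^ 2 := by
  obtain ⟨h, hsmooth, hsupp, h0, hcoef⟩ := exists_contDiff_support_subset_ball_gaborCoef_eq_zero hd
    (hg.locallyIntegrable one_le_two) hQfin.toFinset (by simpa using hQsphere) hε
  let φ := (HasCompactSupport.of_support_subset_isCompact (isCompact_closedBall 0 ε)
    (hsupp.trans ball_subset_closedBall)).toSchwartzMap hsmooth
  obtain ⟨c, hc⟩ := exists_integral_norm_sq_smul_eq_one φ.continuous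
    ((φ.memLp 2).integrable_norm_pow two_ne_zero) h0
  have hfsupp : support ⇑(c • φ) ⊆ ball 0 ε := (support_const_smul_subset c h).trans hsupp
  have hfcoef : ∀ p ∈ Δ, ∀ u ∈ Q, gaborCoef (⇑(c • φ)) g p.1 p.2 u = 0 := fun p _ u hu ↦ by
    rw [FunLike.coe_smul, gaborCoef_smul]
    exact smul_eq_zero_of_right c (hcoef u (by simpa using hu) _ _)
  have hfnorm : ∫ x, ‖(c • φ) x‖ ^ 2 = 1 := hc
  refine ⟨⟨c • φ, hfsupp, hfnorm, hfcoef⟩, ?_⟩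
  rintro ⟨A, B, hA, -, hframe⟩
  have hlower := (hframe (c • φ) hfsupp).1
  simp only [hfnorm, mul_one, fun (p : Δ) (u : Q) ↦ hfcoef p p.2 u u.2, norm_zero,
    zero_pow two_ne_zero, tsum_zero] at hlower
  linarith

/-- for `d ≥ 2`, `g ∈ L²(ℝ)`, a countable `Δ ⊂ ℝ × ℝ`, a finite
`Q ⊂ S^{d−1}` and `ε > 0`, there is a Schwartz function `f` supported in `B_ε(0)` with
`‖f‖₂ = 1` all of whose directional Gabor coefficients over `Δ × Q` vanish.
Consequently `{g_{m,n,u}}_{(m,n,u)∈Δ×Q}` is not a frame for any class of functions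
containing all Schwartz functions supported in `B_ε(0)`: there are no frame bounds
`0 < A ≤ B` on that class. -/
theorem finitely_many_directions_not_frame {d : ℕ} (hd : 2 ≤ d)
    (g : ℝ → ℂ) (hg : MemLp g 2 volume)
    (Δ : Set (ℝ × ℝ)) (hΔ : Δ.Countable)
    (Q : Set (EuclideanSpace ℝ (Fin d))) (hQfin : Q.Finite)
    (hQsphere : ∀ u ∈ Q, ‖u‖ = 1) (ε : ℝ) (hε : 0 < ε) :
    (∃ f : SchwartzMap (EuclideanSpace ℝ (Fin d)) ℂ,
      Function.support ⇑f ⊆ Metric.ball (0 : EuclideanSpace ℝ (Fin d)) ε ∧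
      (∫ x : EuclideanSpace ℝ (Fin d), ‖f x‖ ^ 2) = 1 ∧
      ∀ p ∈ Δ, ∀ u ∈ Q, gaborCoef (⇑f) g p.1 p.2 u = 0) ∧
    ¬ ∃ A B : ℝ, 0 < A ∧ A ≤ B ∧
      ∀ f : SchwartzMap (EuclideanSpace ℝ (Fin d)) ℂ,
        Function.support ⇑f ⊆ Metric.ball (0 : EuclideanSpace ℝ (Fin d)) ε →
        A * ∫ x : EuclideanSpace ℝ (Fin d), ‖f x‖ ^ 2 ≤
            (∑' p : Δ, ∑' u : Q, ‖gaborCoef (⇑f) g (p : ℝ × ℝ).1 (p : ℝ × ℝ).2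
              (u : EuclideanSpace ℝ (Fin d))‖ ^ 2) ∧
          (∑' p : Δ, ∑' u : Q, ‖gaborCoef (⇑f) g (p : ℝ × ℝ).1 (p : ℝ × ℝ).2
              (u : EuclideanSpace ℝ (Fin d))‖ ^ 2) ≤
            B * ∫ x : EuclideanSpace ℝ (Fin d), ‖f x‖ ^ 2 :=
  finitely_many_directions_not_frame_general hd g hg Δ Q hQfin hQsphere ε hε

end
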